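/- Suppose the ESP data satisfies Assumption (B) and fix δ > 0 and a set B as in Assumption (B). Then for each x ∈ ∂G ∖ W*, the adjoint L_x* of the derivative projection operator L_x is the unique linear map ℝ^J → ℝ^J such that for every y ∈ ℝ^J, L_x* y ∈ d(x)^⊥ and L_x* y − y ∈ H_x^⊥; moreover ‖L_x* y‖_{B*} ≤ ‖y‖_{B*} for all y ∈ ℝ^J, i.e., L_x* is a contraction with respect to the gauge of B* and maps B* into B* ∩ d(x)^⊥. -/

import Mathlib

open scoped RealInnerProductSpace ENNReal NNReal
open Filter Topology Set MeasureTheory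

noncomputable section

abbrev EucSp (J : ℕ) : Type := EuclideanSpace ℝ (Fin J)

/-- The convex cone generated by a set of vectors (by convention `coneGen ∅ = {0}`). -/
def coneGen {J : ℕ} (s : Set (EucSp J)) : Set (EucSp J) :=
  { y | ∃ (k : ℕ) (r : Fin k → ℝ) (v : Fin k → EucSp J),
      (∀ i, 0 ≤ r i) ∧ (∀ i, v i ∈ s) ∧ y = ∑ i, r i • v i }

/-- The polyhedral domain `G`. -/
def Gset {J N : ℕ} (n : Fin N → EucSp J) (c : Fin N → ℝ) : Set (EucSp J) :=
  { x | ∀ i, c i ≤ ⟪x, n i⟫ }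

/-- The active index set `I(x)`. -/
def ISet {J N : ℕ} (n : Fin N → EucSp J) (c : Fin N → ℝ) (x : EucSp J) : Set (Fin N) :=
  { i | ⟪x, n i⟫ = c i }

/-- The cone `d(x)` of admissible reflection directions at `x`. -/
def dCone {J N : ℕ} (n : Fin N → EucSp J) (c : Fin N → ℝ) (d : Fin N → EucSp J)
    (x : EucSp J) : Set (EucSp J) :=
  coneGen (d '' ISet n c x)

/-- `(Z, Y)` solves the extended Skorokhod problem for `X`. -/
def SolvesESP {J N : ℕ} (n : Fin N → EucSp J) (c : Fin N → ℝ) (d : Fin N → EucSp J)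
    (X Z Y : ℝ → EucSp J) : Prop :=
  ContinuousOn Z (Ici 0) ∧ ContinuousOn Y (Ici 0) ∧
  Y 0 ∈ dCone n c d (Z 0) ∧
  (∀ t ∈ Ici (0:ℝ), Z t = X t + Y t) ∧
  (∀ t ∈ Ici (0:ℝ), Z t ∈ Gset n c) ∧
  (∀ s t : ℝ, 0 ≤ s → s < t →
    Y t - Y s ∈ coneGen (⋃ u ∈ Ioc s t, dCone n c d (Z u)))

/-- Assumption (B). -/
def AssumptionB {J N : ℕ} (n d : Fin N → EucSp J) : Prop :=
  ∃ δ : ℝ, 0 < δ ∧ ∃ B : Set (EucSp J),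
    IsCompact B ∧ Convex ℝ B ∧ (∀ z ∈ B, -z ∈ B) ∧ (0 : EucSp J) ∈ interior B ∧
    ∀ i : Fin N, ∀ z ∈ frontier B, |⟪z, n i⟫| < δ →
      ∀ ν : EucSp J, ‖ν‖ = 1 → (∀ y ∈ B, 0 ≤ ⟪ν, y - z⟫) → ⟪ν, d i⟫ = 0

/-- Assumption (π). -/
def AssumptionPi {J N : ℕ} (n : Fin N → EucSp J) (c : Fin N → ℝ) (d : Fin N → EucSp J)
    (proj : EucSp J → EucSp J) : Prop :=
  (∀ x, proj x ∈ Gset n c) ∧ (∀ x ∈ Gset n c, proj x = x) ∧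
  (∀ x, x ∉ Gset n c → proj x - x ∈ dCone n c d (proj x))

/-- The supremum norm `‖f‖_T` of `f` over `[0, T]`. -/
def supNorm {J : ℕ} (f : ℝ → EucSp J) (T : ℝ) : ℝ :=
  ⨆ s : Icc (0:ℝ) T, ‖f s.1‖

/-- The subspace (as a set) `H_x`. -/
def Hset {J N : ℕ} (n : Fin N → EucSp J) (c : Fin N → ℝ) (x : EucSp J) : Set (EucSp J) :=
  { y | ∀ i ∈ ISet n c x, ⟪y, n i⟫ = 0 }

/-- The smooth part `S` of the boundary. -/
def Sstar {J N : ℕ} (n : Fin N → EucSp J) (c : Fin N → ℝ) : Set (EucSp J) :=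
  { x ∈ frontier (Gset n c) | (ISet n c x).ncard = 1 }

/-- The nonsmooth part `N` of the boundary. -/
def Nstar {J N : ℕ} (n : Fin N → EucSp J) (c : Fin N → ℝ) : Set (EucSp J) :=
  { x ∈ frontier (Gset n c) | 2 ≤ (ISet n c x).ncard }

/-- The set `W`. -/
def Wstar {J N : ℕ} (n : Fin N → EucSp J) (c : Fin N → ℝ) (d : Fin N → EucSp J) :
    Set (EucSp J) :=
  { x ∈ Nstar n c | Submodule.span ℝ (Hset n c x ∪ dCone n c d x) ≠ ⊤ }

/-- The boundary jitter property on `[0, T)`. -/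
def Jitter {J N : ℕ} (n : Fin N → EucSp J) (c : Fin N → ℝ) (Z Y : ℝ → EucSp J)
    (T : ℝ≥0∞) : Prop :=
  (∀ t : ℝ, 0 ≤ t → ENNReal.ofReal t < T → Z t ∈ Sstar n c →
    ∀ s u : ℝ, s < t → t < u → ENNReal.ofReal u < T →
      ∃ a ∈ Ioo (max s 0) u, ∃ b ∈ Ioo (max s 0) u, Y a ≠ Y b) ∧
  (volume {t : ℝ | 0 ≤ t ∧ ENNReal.ofReal t < T ∧ Z t ∈ Nstar n c} = 0) ∧
  (Z 0 ∈ Nstar n c →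
    ∀ i ∈ ISet n c (Z 0), ∀ δ : ℝ, 0 < δ → ENNReal.ofReal δ < T →
      ∃ u ∈ Ioo (0:ℝ) δ, ISet n c (Z u) = {i}) ∧
  (∀ t : ℝ, 0 < t → ENNReal.ofReal t < T → Z t ∈ Nstar n c →
    ∀ i ∈ ISet n c (Z t), ∀ δ : ℝ, 0 < δ → δ < t →
      ∃ s ∈ Ioo (t - δ) t, ISet n c (Z s) = {i})

/-- `f` is right-continuous with finite left limits on `[0, T)`. -/
def DrOn {J : ℕ} (f : ℝ → EucSp J) (T : ℝ≥0∞) : Prop :=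
  (∀ t : ℝ, 0 ≤ t → ENNReal.ofReal t < T → Tendsto f (𝓝[>] t) (𝓝 (f t))) ∧
  (∀ t : ℝ, 0 < t → ENNReal.ofReal t < T → ∃ L, Tendsto f (𝓝[<] t) (𝓝 L))

/-- `f ∈ D_{ℓ,r}([0,T))`. -/
def DlrOn {J : ℕ} (f : ℝ → EucSp J) (T : ℝ≥0∞) : Prop :=
  (∀ t : ℝ, 0 < t → ENNReal.ofReal t < T → ∃ L, Tendsto f (𝓝[<] t) (𝓝 L)) ∧
  (∀ t : ℝ, 0 ≤ t → ENNReal.ofReal t < T → ∃ L, Tendsto f (𝓝[>] t) (𝓝 L)) ∧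
  (∀ t : ℝ, 0 < t → ENNReal.ofReal t < T →
    Tendsto f (𝓝[<] t) (𝓝 (f t)) ∨ Tendsto f (𝓝[>] t) (𝓝 (f t)))

/-- `(φ, η)` solves the derivative problem associated with `Z` for `ψ` on `[0, T)`. -/
def SolvesDPOn {J N : ℕ} (n : Fin N → EucSp J) (c : Fin N → ℝ) (d : Fin N → EucSp J)
    (Z ψ φ η : ℝ → EucSp J) (T : ℝ≥0∞) : Prop :=
  DrOn φ T ∧ DrOn η T ∧
  η 0 ∈ Submodule.span ℝ (dCone n c d (Z 0)) ∧
  (∀ t : ℝ, 0 ≤ t → ENNReal.ofReal t < T →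
    φ t = ψ t + η t ∧ φ t ∈ Hset n c (Z t)) ∧
  (∀ s t : ℝ, 0 ≤ s → s < t → ENNReal.ofReal t < T →
    η t - η s ∈ Submodule.span ℝ (⋃ u ∈ Ioc s t, dCone n c d (Z u)))

/-- Decomposition `Y = R L` where the components of `L` are nondecreasing and can
increase only when `Z` is on the corresponding face. -/
def LocalTimeProps {J N : ℕ} (n : Fin N → EucSp J) (c : Fin N → ℝ) (d : Fin N → EucSp J)
    (Z Y : ℝ → EucSp J) (L : ℝ → EucSp N) : Prop :=
  ContinuousOn L (Ici 0) ∧ L 0 = 0 ∧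
  (∀ t ∈ Ici (0:ℝ), ∀ i, 0 ≤ L t i) ∧
  (∀ i, MonotoneOn (fun t => L t i) (Ici 0)) ∧
  (∀ t ∈ Ici (0:ℝ), Y t = ∑ i, L t i • d i) ∧
  (∀ i : Fin N, ∀ s t : ℝ, 0 ≤ s → s ≤ t →
    (∀ u ∈ Icc s t, Z u ∉ {x ∈ frontier (Gset n c) | ⟪x, n i⟫ = c i}) →
    L s i = L t i)

/-- The dual set `B*`. -/
def dualSet {J : ℕ} (B : Set (EucSp J)) : Set (EucSp J) :=
  { y | ∀ z ∈ B, ⟪y, z⟫ ≤ 1 }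

/-- `frontComp Ls k y = Ls 0 (Ls 1 (⋯ (Ls (k-1) y)))`. -/
def frontComp {J : ℕ} (Ls : ℕ → (EucSp J → EucSp J)) : ℕ → EucSp J → EucSp J
  | 0, y => y
  | (k+1), y => frontComp Ls k (Ls k y)

/-- `backComp Ls k y = Ls (k-1) (⋯ (Ls 0 y))`. -/
def backComp {J : ℕ} (Ls : ℕ → (EucSp J → EucSp J)) : ℕ → EucSp J → EucSp J
  | 0, y => y
  | (k+1), y => Ls k (backComp Ls k y)

/-!
Everything rests on one gauge inequality: for `h ∈ H_x` and `u ∈ span d(x)`,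
`‖h‖_B ≤ ‖h + u‖_B`. Indeed `h / ‖h‖_B` is a boundary point of `B` at which every
`⟪·, n i⟫`, `i ∈ I(x)`, vanishes, so by (B) each inward normal `ν` there is orthogonal to
`d(x)`, and the supporting half-space `{⟪ν, ·⟫ ≥ ⟪ν, h / ‖h‖_B⟫}` bounds the gauge of `h + u`
from below.

Taking `u = -h` gives `H_x ∩ span d(x) = 0`, so `L_x` is the projection onto `H_x` along
`span d(x)` and `L_x*` the projection onto `d(x)^⊥` along `H_x^⊥`; the latter is unique because
`H_x + span d(x) = ℝ^J` off `W*`. Taking `h = L_x y` gives `‖L_x y‖_B ≤ ‖y‖_B`, so `L_x` maps `B`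
into `B`, hence `L_x*` maps `B*` into `B*`, which is the contraction for `‖·‖_{B*}`.
-/

section InwardNormal

variable {E : Type*} [NormedAddCommGroup E] [InnerProductSpace ℝ E] {B : Set E}

theorem exists_unit_inward_normal [CompleteSpace E] (hBconv : Convex ℝ B)
    (hB0 : (0 : E) ∈ interior B) {z : E} (hz : z ∉ interior B) :
    ∃ ν : E, ‖ν‖ = 1 ∧ (∀ y ∈ B, 0 ≤ ⟪ν, y - z⟫) ∧ ⟪ν, z⟫ < 0 := by
  obtain ⟨f, hf⟩ := geometric_hahn_banach_open_point hBconv.interior isOpen_interior hz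
  have hfB : ∀ y ∈ B, f y ≤ f z := by
    have hB : B ⊆ closure (interior B) := by
      rw [hBconv.closure_interior_eq_closure_of_nonempty_interior ⟨0, hB0⟩]
      exact subset_closure
    exact fun y hy => closure_minimal (fun a ha => (hf a ha).le)
      (isClosed_le f.continuous continuous_const) (hB hy)
  set v := (InnerProductSpace.toDual ℝ E).symm f
  have hv : ∀ w, ⟪v, w⟫ = f w := fun w => InnerProductSpace.toDual_symm_apply
  have hvz : 0 < ⟪v, z⟫ := by simpa [hv] using hf 0 hB0
  have hv0 : 0 < ‖v‖ := norm_pos_iff.2 fun h => by simp [h] at hvz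
  have hv0' : 0 < ‖v‖⁻¹ := inv_pos.2 hv0
  refine ⟨-‖v‖⁻¹ • v, ?_, fun y hy => ?_, ?_⟩
  · rw [norm_smul, norm_neg, norm_inv, norm_norm, inv_mul_cancel₀ hv0.ne']
  · have := hfB y hy
    rw [real_inner_smul_left, inner_sub_right, hv, hv]
    nlinarith
  · rw [real_inner_smul_left]
    nlinarith

theorem gauge_le_gauge_add_of_inner_normal_eq_zero [CompleteSpace E] (hBconv : Convex ℝ B)
    (hB0 : (0 : E) ∈ interior B) {H : Submodule ℝ E} {u : E}
    (hu : ∀ z ∈ frontier B, z ∈ H →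
      ∀ ν : E, ‖ν‖ = 1 → (∀ y ∈ B, 0 ≤ ⟪ν, y - z⟫) → ⟪ν, u⟫ = 0)
    {h : E} (hh : h ∈ H) : gauge B h ≤ gauge B (h + u) := by
  have hBn : B ∈ 𝓝 0 := mem_interior_iff_mem_nhds.1 hB0
  by_contra! hlt
  set g := gauge B h
  have hg : 0 < g := (gauge_nonneg _).trans_lt hlt
  set ζ := g⁻¹ • h
  have hζ : ζ ∈ frontier B := by
    rw [← gauge_eq_one_iff_mem_frontier hBconv hBn, gauge_smul_of_nonneg (inv_nonneg.2 hg.le),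
      smul_eq_mul, inv_mul_cancel₀ hg.ne']
  obtain ⟨ν, hν1, hνB, hνζ⟩ := exists_unit_inward_normal hBconv hB0 hζ.2
  have hνu := hu ζ hζ (H.smul_mem _ hh) ν hν1 hνB
  obtain ⟨b, hb0, hbg, y, hy, hhu⟩ := exists_lt_of_gauge_lt (absorbent_nhds_zero hBn) hlt
  have hg_eq : ⟪ν, h + u⟫ = g * ⟪ν, ζ⟫ := by
    rw [inner_add_right, hνu, add_zero, real_inner_smul_right, mul_inv_cancel_left₀ hg.ne']
  have hb_eq : ⟪ν, h + u⟫ = b * ⟪ν, y⟫ := by rw [← hhu, real_inner_smul_right]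
  have hy' := hνB y hy
  rw [inner_sub_right] at hy'
  nlinarith [mul_nonneg hb0.le hy', mul_pos (sub_pos.2 hbg) (neg_pos.2 hνζ)]

end InwardNormal

section GaugeContraction

open scoped Pointwise

variable {F : Type*} [NormedAddCommGroup F] [NormedSpace ℝ F] {s : Set F}

theorem gauge_apply_le_of_mapsTo (hs : Absorbent ℝ s) {f : F →ₗ[ℝ] F} (hf : MapsTo f s s)
    (x : F) : gauge s (f x) ≤ gauge s x := by
  refine le_of_forall_gt_imp_ge_of_dense fun a ha => ?_
  obtain ⟨b, hb0, hba, y, hy, rfl⟩ := exists_lt_of_gauge_lt hs ha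
  have hfy : f (b • y) ∈ b • s := by
    rw [map_smul]
    exact smul_mem_smul_set (hf hy)
  exact (gauge_le_of_mem hb0.le hfy).trans hba.le

theorem mapsTo_of_gauge_apply_le (hsc : IsClosed s) (hsconv : Convex ℝ s) (hs0 : s ∈ 𝓝 0)
    {f : F → F} (hf : ∀ x, gauge s (f x) ≤ gauge s x) : MapsTo f s s := fun x hx => by
  rw [← hsc.closure_eq, ← gauge_le_one_iff_mem_closure hsconv hs0]
  exact (hf x).trans (gauge_le_one_of_mem hx)

theorem disjoint_of_gauge_le_gauge_add (hsb : Bornology.IsBounded s) (hs0 : s ∈ 𝓝 0)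
    {H D : Submodule ℝ F} (hgauge : ∀ h ∈ H, ∀ u ∈ D, gauge s h ≤ gauge s (h + u)) :
    Disjoint H D := by
  refine Submodule.disjoint_def.2 fun w hwH hwD => ?_
  have hw : gauge s w ≤ 0 := by simpa using hgauge w hwH (-w) (D.neg_mem hwD)
  exact (gauge_eq_zero (absorbent_nhds_zero hs0)
    ((NormedSpace.isVonNBounded_iff ℝ).2 hsb)).1 (hw.antisymm (gauge_nonneg w))

end GaugeContraction

section ProjectionAlong

variable {E : Type*} [NormedAddCommGroup E] [InnerProductSpace ℝ E]

def IsProjAlong (L : E →ₗ[ℝ] E) (H D : Submodule ℝ E) : Prop :=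
  ∀ y, L y ∈ H ∧ L y - y ∈ D

variable {L A : E →ₗ[ℝ] E} {H D : Submodule ℝ E}

namespace IsProjAlong

theorem apply_eq_zero (hL : IsProjAlong L H D) (hHD : Disjoint H D) {u : E} (hu : u ∈ D) :
    L u = 0 :=
  Submodule.disjoint_def.1 hHD _ (hL u).1 (by simpa using D.add_mem (hL u).2 hu)

theorem apply_eq_self (hL : IsProjAlong L H D) (hHD : Disjoint H D) {u : E} (hu : u ∈ H) :
    L u = u :=
  sub_eq_zero.1 (Submodule.disjoint_def.1 hHD _ (H.sub_mem (hL u).1 hu) (hL u).2)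

theorem unique (hL : IsProjAlong L H D) (hA : IsProjAlong A H D) (hHD : Disjoint H D) :
    L = A := by
  ext y
  refine sub_eq_zero.1 (Submodule.disjoint_def.1 hHD _ (H.sub_mem (hL y).1 (hA y).1) ?_)
  simpa using D.sub_mem (hL y).2 (hA y).2

theorem gauge_apply_le {B : Set E} (hL : IsProjAlong L H D)
    (hgauge : ∀ h ∈ H, ∀ u ∈ D, gauge B h ≤ gauge B (h + u)) (z : E) :
    gauge B (L z) ≤ gauge B z := by
  simpa using hgauge _ (hL z).1 _ (D.neg_mem (hL z).2)

theorem adjoint [FiniteDimensional ℝ E] (hL : IsProjAlong L H D) (hHD : Disjoint H D) :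
    IsProjAlong (LinearMap.adjoint L) Dᗮ Hᗮ := fun y => by
  refine ⟨(Submodule.mem_orthogonal' _ _).2 fun u hu => ?_,
    (Submodule.mem_orthogonal' _ _).2 fun u hu => ?_⟩
  · rw [LinearMap.adjoint_inner_left, hL.apply_eq_zero hHD hu, inner_zero_right]
  · rw [inner_sub_left, LinearMap.adjoint_inner_left, hL.apply_eq_self hHD hu, sub_self]

end IsProjAlong

theorem disjoint_orthogonal_of_sup_eq_top (h : H ⊔ D = ⊤) : Disjoint Dᗮ Hᗮ := by
  rw [disjoint_iff, Submodule.inf_orthogonal, sup_comm, h, Submodule.top_orthogonal_eq_bot]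

end ProjectionAlong

section ReflectionData

variable {J N : ℕ} {n d : Fin N → EucSp J} {c : Fin N → ℝ} {x : EucSp J}

theorem subset_coneGen (s : Set (EucSp J)) : s ⊆ coneGen s := fun v hv =>
  ⟨1, fun _ => 1, fun _ => v, fun _ => zero_le_one, fun _ => hv, by simp⟩

theorem coneGen_subset_span (s : Set (EucSp J)) : coneGen s ⊆ Submodule.span ℝ s := by
  rintro _ ⟨k, r, v, -, hv, rfl⟩
  exact Submodule.sum_mem _ fun i _ => Submodule.smul_mem _ _ (Submodule.subset_span (hv i))

theorem Hset_eq_orthogonal :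
    Hset n c x = ((Submodule.span ℝ (n '' ISet n c x))ᗮ : Set (EucSp J)) := by
  ext y
  rw [SetLike.mem_coe, ← Submodule.span_singleton_le_iff_mem, ← Submodule.isOrtho_iff_le,
    Submodule.isOrtho_span]
  simp [Hset]

theorem span_Hset :
    Submodule.span ℝ (Hset n c x) = (Submodule.span ℝ (n '' ISet n c x))ᗮ := by
  rw [Hset_eq_orthogonal, Submodule.span_eq]

theorem inner_eq_zero_of_mem_span_dCone {ν : EucSp J} (hν : ∀ i ∈ ISet n c x, ⟪ν, d i⟫ = 0)
    {u : EucSp J} (hu : u ∈ Submodule.span ℝ (dCone n c d x)) : ⟪ν, u⟫ = 0 := by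
  have hle : Submodule.span ℝ (dCone n c d x) ≤ (ℝ ∙ ν)ᗮ := by
    refine Submodule.span_le.2 ((coneGen_subset_span _).trans (Submodule.span_le.2 ?_))
    rintro _ ⟨i, hi, rfl⟩
    exact Submodule.mem_orthogonal_singleton_iff_inner_right.2 (hν i hi)
  exact Submodule.mem_orthogonal_singleton_iff_inner_right.1 (hle hu)

theorem gauge_le_gauge_add_of_mem_span_dCone {δ : ℝ} (hδ : 0 < δ) {B : Set (EucSp J)}
    (hBconvex : Convex ℝ B) (hB0 : (0 : EucSp J) ∈ interior B)
    (hBgeom : ∀ i : Fin N, ∀ z ∈ frontier B, |⟪z, n i⟫| < δ →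
      ∀ ν : EucSp J, ‖ν‖ = 1 → (∀ y ∈ B, 0 ≤ ⟪ν, y - z⟫) → ⟪ν, d i⟫ = 0)
    (h : EucSp J) (hh : h ∈ Submodule.span ℝ (Hset n c x))
    (u : EucSp J) (hu : u ∈ Submodule.span ℝ (dCone n c d x)) : gauge B h ≤ gauge B (h + u) := by
  refine gauge_le_gauge_add_of_inner_normal_eq_zero hBconvex hB0
    (fun z hzB hzH ν hν1 hνB => inner_eq_zero_of_mem_span_dCone (fun i hi => ?_) hu) hh
  rw [← SetLike.mem_coe, span_Hset, ← Hset_eq_orthogonal] at hzH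
  exact hBgeom i z hzB (by rwa [hzH i hi, abs_zero]) ν hν1 hνB

theorem span_Hset_sup_span_dCone_eq_top (hdn : ∀ i, ⟪d i, n i⟫ = 1)
    (hx : x ∈ frontier (Gset n c)) (hxW : x ∉ Wstar n c d) :
    Submodule.span ℝ (Hset n c x) ⊔ Submodule.span ℝ (dCone n c d x) = ⊤ := by
  rw [← Submodule.span_union]
  by_cases hxN : x ∈ Nstar n c
  · exact not_not.1 fun h => hxW ⟨hxN, h⟩
  have hI : (ISet n c x).Subsingleton := by
    rw [← Set.ncard_le_one_iff_subsingleton]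
    exact le_of_not_gt fun h => hxN ⟨hx, h⟩
  rw [eq_top_iff]
  rintro y -
  rcases hI.eq_empty_or_singleton with hI | ⟨i, hI⟩
  · exact Submodule.subset_span (Or.inl fun j hj => by simp [hI] at hj)
  have hdi : d i ∈ dCone n c d x := subset_coneGen _ ⟨i, by simp [hI], rfl⟩
  have htan : y - ⟪y, n i⟫ • d i ∈ Hset n c x := fun j hj => by
    rw [hI, Set.mem_singleton_iff] at hj
    rw [hj, inner_sub_left, real_inner_smul_left, hdn, mul_one, sub_self]
  rw [← sub_add_cancel y (⟪y, n i⟫ • d i)]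
  exact Submodule.add_mem _ (Submodule.subset_span (Or.inl htan))
    (Submodule.smul_mem _ _ (Submodule.subset_span (Or.inr hdi)))

end ReflectionData

section DualSet

variable {J : ℕ} {B : Set (EucSp J)}

theorem dualSet_mem_nhds_zero (hB : Bornology.IsBounded B) : dualSet B ∈ 𝓝 0 := by
  obtain ⟨R, hR0, hR⟩ := hB.exists_pos_norm_le
  refine Metric.mem_nhds_iff.2 ⟨R⁻¹, inv_pos.2 hR0, fun y hy z hz => ?_⟩
  rw [Metric.mem_ball, dist_zero_right] at hy
  calc ⟪y, z⟫ ≤ ‖y‖ * ‖z‖ := real_inner_le_norm y z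
    _ ≤ R⁻¹ * R := mul_le_mul hy.le (hR z hz) (norm_nonneg z) (inv_nonneg.2 hR0.le)
    _ = 1 := inv_mul_cancel₀ hR0.ne'

theorem mapsTo_adjoint_dualSet {L : EucSp J →ₗ[ℝ] EucSp J} (hL : MapsTo L B B) :
    MapsTo (LinearMap.adjoint L) (dualSet B) (dualSet B) := fun y hy z hz => by
  rw [LinearMap.adjoint_inner_left]
  exact hy (L z) (hL hz)

end DualSet

theorem statement14_general (J N : ℕ)
    (n d : Fin N → EucSp J) (c : Fin N → ℝ)
    (hdn : ∀ i, ⟪d i, n i⟫ = 1)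
    (δ : ℝ) (hδ : 0 < δ) (B : Set (EucSp J))
    (hBcompact : IsCompact B) (hBconvex : Convex ℝ B)
    (hB0 : (0 : EucSp J) ∈ interior B)
    (hBgeom : ∀ i : Fin N, ∀ z ∈ frontier B, |⟪z, n i⟫| < δ →
      ∀ ν : EucSp J, ‖ν‖ = 1 → (∀ y ∈ B, 0 ≤ ⟪ν, y - z⟫) → ⟪ν, d i⟫ = 0) :
    ∀ x ∈ frontier (Gset n c), x ∉ Wstar n c d →
      ∀ L : EucSp J →ₗ[ℝ] EucSp J,
        (∀ y : EucSp J, L y ∈ Hset n c x ∧ L y - y ∈ Submodule.span ℝ (dCone n c d x)) →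
        (∀ y : EucSp J,
          LinearMap.adjoint L y ∈ (Submodule.span ℝ (dCone n c d x))ᗮ ∧
          LinearMap.adjoint L y - y ∈ (Submodule.span ℝ (Hset n c x))ᗮ) ∧
        (∀ A : EucSp J →ₗ[ℝ] EucSp J,
          (∀ y : EucSp J, A y ∈ (Submodule.span ℝ (dCone n c d x))ᗮ ∧
            A y - y ∈ (Submodule.span ℝ (Hset n c x))ᗮ) →
          A = LinearMap.adjoint L) ∧
        (∀ y : EucSp J,
          gauge (dualSet B) (LinearMap.adjoint L y) ≤ gauge (dualSet B) y) ∧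
        (∀ y ∈ dualSet B,
          LinearMap.adjoint L y ∈ dualSet B ∧
          LinearMap.adjoint L y ∈ (Submodule.span ℝ (dCone n c d x))ᗮ) := by
  intro x hx hxW L hL
  have hproj :
      IsProjAlong L (Submodule.span ℝ (Hset n c x)) (Submodule.span ℝ (dCone n c d x)) :=
    fun y => ⟨Submodule.subset_span (hL y).1, (hL y).2⟩
  have hB0' : B ∈ 𝓝 0 := mem_interior_iff_mem_nhds.1 hB0
  have hgauge := gauge_le_gauge_add_of_mem_span_dCone (c := c) (x := x) hδ hBconvex hB0 hBgeom
  have hHD := disjoint_of_gauge_le_gauge_add hBcompact.isBounded hB0' hgauge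
  have hadj := hproj.adjoint hHD
  have hdual : MapsTo (LinearMap.adjoint L) (dualSet B) (dualSet B) :=
    mapsTo_adjoint_dualSet
      (mapsTo_of_gauge_apply_le hBcompact.isClosed hBconvex hB0' (hproj.gauge_apply_le hgauge))
  refine ⟨hadj, fun A hA => ?_, gauge_apply_le_of_mapsTo
    (absorbent_nhds_zero (dualSet_mem_nhds_zero hBcompact.isBounded)) hdual,
    fun y hy => ⟨hdual hy, (hadj y).1⟩⟩
  exact IsProjAlong.unique hA hadj
    (disjoint_orthogonal_of_sup_eq_top (span_Hset_sup_span_dCone_eq_top hdn hx hxW))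

/-- **Lemma (adjoint derivative projection operators).**
Fix `δ > 0` and a set `B` as in Assumption (B).  For each `x ∈ ∂G \ W*` and the derivative
projection operator `L = L_x`, the adjoint `L*` is the unique linear map with
`L* y ∈ d(x)^⊥` and `L* y − y ∈ H_x^⊥` for all `y`; moreover `L*` is a contraction for the
gauge of `B*` and maps `B*` into `B* ∩ d(x)^⊥`. -/
theorem statement14 (J N : ℕ) (hJ : 1 ≤ J) (hN : 1 ≤ N)
    (n d : Fin N → EucSp J) (c : Fin N → ℝ)
    (hn : ∀ i, ‖n i‖ = 1) (hdn : ∀ i, ⟪d i, n i⟫ = 1)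
    (hGne : (Gset n c).Nonempty)
    (δ : ℝ) (hδ : 0 < δ) (B : Set (EucSp J))
    (hBcompact : IsCompact B) (hBconvex : Convex ℝ B) (hBsymm : ∀ z ∈ B, -z ∈ B)
    (hB0 : (0 : EucSp J) ∈ interior B)
    (hBgeom : ∀ i : Fin N, ∀ z ∈ frontier B, |⟪z, n i⟫| < δ →
      ∀ ν : EucSp J, ‖ν‖ = 1 → (∀ y ∈ B, 0 ≤ ⟪ν, y - z⟫) → ⟪ν, d i⟫ = 0) :
    ∀ x ∈ frontier (Gset n c), x ∉ Wstar n c d →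
      ∀ L : EucSp J →ₗ[ℝ] EucSp J,
        (∀ y : EucSp J, L y ∈ Hset n c x ∧ L y - y ∈ Submodule.span ℝ (dCone n c d x)) →
        (∀ y : EucSp J,
          LinearMap.adjoint L y ∈ (Submodule.span ℝ (dCone n c d x))ᗮ ∧
          LinearMap.adjoint L y - y ∈ (Submodule.span ℝ (Hset n c x))ᗮ) ∧
        (∀ A : EucSp J →ₗ[ℝ] EucSp J,
          (∀ y : EucSp J, A y ∈ (Submodule.span ℝ (dCone n c d x))ᗮ ∧
            A y - y ∈ (Submodule.span ℝ (Hset n c x))ᗮ) →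
          A = LinearMap.adjoint L) ∧
        (∀ y : EucSp J,
          gauge (dualSet B) (LinearMap.adjoint L y) ≤ gauge (dualSet B) y) ∧
        (∀ y ∈ dualSet B,
          LinearMap.adjoint L y ∈ dualSet B ∧
          LinearMap.adjoint L y ∈ (Submodule.span ℝ (dCone n c d x))ᗮ) :=
  statement14_general J N n d c hdn δ hδ B hBcompact hBconvex hB0 hBgeom
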